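/- Let (X,r) be a finite left non-degenerate idempotent solution and d a multiple of the exponent of the permutation group G(X,r) = ⟨λ_x : x ∈ X⟩. For u ∈ Λ, the element c_u = (du, id) belongs to S_u and is central in S_u. -/

import Mathlib

open Function

variable {X : Type*}

def lam (r : X × X → X × X) (x y : X) : X := (r (x, y)).1

def rho (r : X × X → X × X) (y x : X) : X := (r (x, y)).2

/-- `r × id` acting on triples. -/
def rl (r : X × X → X × X) : X × X × X → X × X × X :=
  fun p => ((r (p.1, p.2.1)).1, (r (p.1, p.2.1)).2, p.2.2)

/-- `id × r` acting on triples. -/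
def rr (r : X × X → X × X) : X × X × X → X × X × X :=
  fun p => (p.1, r (p.2.1, p.2.2))

/-- the Yang–Baxter (braid) equation for a set-theoretic map. -/
def YB (r : X × X → X × X) : Prop :=
  rl r ∘ rr r ∘ rl r = rr r ∘ rl r ∘ rr r

/-- the relation `x + y = y + y` on the free monoid. -/
def simpleRel (X : Type*) : FreeMonoid X → FreeMonoid X → Prop :=
  fun a b => ∃ x y : X, a = FreeMonoid.of x * FreeMonoid.of y ∧
    b = FreeMonoid.of y * FreeMonoid.of y

/-- the derived structure monoid `A(X,r)` of a left non-degenerate idempotent solution. -/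
abbrev DerMon (X : Type*) := (conGen (simpleRel X)).Quotient

def dof (x : X) : DerMon X := (conGen (simpleRel X)).mk' (FreeMonoid.of x)

/-- the diagonal map `q(x) = λ_x⁻¹(x)`. -/
def qmap (L : DerMon X → Equiv.Perm X) (x : X) : X := (L (dof x))⁻¹ x

/-- the product of the structure semigroup realised on pairs `(a, λ_a)`. -/
def sop (L : DerMon X → Equiv.Perm X) (act : Equiv.Perm X → DerMon X →* DerMon X)
    (a b : DerMon X) : DerMon X := a * act (L a) b

/-- the component `S_u = {(a,λ_a) : λ_a⁻¹(a) = |a|·u}`. -/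
def Su (L : DerMon X → Equiv.Perm X) (act : Equiv.Perm X → DerMon X →* DerMon X)
    (len : DerMon X → ℕ) (u : X) : Set (DerMon X) :=
  {a | a ≠ 1 ∧ act (L a)⁻¹ a = dof u ^ len a}

/-- `X_u = {x ∈ X : λ_{dx}(u) = x}`. -/
def Xu (L : DerMon X → Equiv.Perm X) (d : ℕ) (u : X) : Set X :=
  {x | L (dof x ^ d) u = x}

/-- The defining relation of the derived monoid. -/
lemma dof_rel (x y : X) : dof x * dof y = dof y * dof y := by
  unfold dof
  rw [← map_mul, ← map_mul]
  exact Con.eq _ |>.mpr (ConGen.Rel.of _ _ ⟨x, y, rfl, rfl⟩)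

lemma dof_mul_pow (x z : X) (k : ℕ) (hk : 1 ≤ k) :
    dof x * dof z ^ k = dof z ^ (k + 1) := by
  obtain ⟨m, rfl⟩ := Nat.exists_eq_add_of_le hk
  rw [add_comm 1 m, pow_succ' (dof z) m, ← mul_assoc, dof_rel x z, mul_assoc,
    ← pow_succ' (dof z) m, ← pow_succ' (dof z) (m + 1)]

lemma len_one (len : DerMon X → ℕ) (hlenmul : ∀ a b : DerMon X, len (a * b) = len a + len b) :
    len 1 = 0 := by
  have := hlenmul 1 1
  simp at this
  omega

/-- Collapse: multiplying any element on the left of a positive power of `dof z` only adds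
lengths. -/
lemma collapse (len : DerMon X → ℕ)
    (hlenmul : ∀ a b : DerMon X, len (a * b) = len a + len b)
    (hlenof : ∀ x : X, len (dof x) = 1)
    (a : DerMon X) (z : X) (k : ℕ) (hk : 1 ≤ k) :
    a * dof z ^ k = dof z ^ (len a + k) := by
  induction a using Con.induction_on with
  | H w =>
    induction w using FreeMonoid.inductionOn' with
    | one =>
      show (1 : DerMon X) * dof z ^ k = dof z ^ (len 1 + k)
      rw [len_one len hlenmul, one_mul, zero_add]
    | of_mul x w ih =>
      have h1 : ((FreeMonoid.of x * w : FreeMonoid X) : DerMon X) = dof x * (w : DerMon X) := by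
        show (conGen (simpleRel X)).mk' _ = _
        rw [map_mul]; rfl
      rw [h1, mul_assoc, ih, dof_mul_pow x z _ (le_trans hk (Nat.le_add_left k _)),
        hlenmul, hlenof]
      ring_nf

lemma len_pos_of_ne_one (len : DerMon X → ℕ)
    (hlenmul : ∀ a b : DerMon X, len (a * b) = len a + len b)
    (hlenof : ∀ x : X, len (dof x) = 1)
    (a : DerMon X) (ha : a ≠ 1) : 1 ≤ len a := by
  by_contra h
  apply ha
  have hl0 : len a = 0 := by omega
  induction a using Con.induction_on with
  | H w =>
    induction w using FreeMonoid.inductionOn' with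
    | one => rfl
    | of_mul x w ih =>
      exfalso
      have h1 : ((FreeMonoid.of x * w : FreeMonoid X) : DerMon X) = dof x * (w : DerMon X) := by
        show (conGen (simpleRel X)).mk' _ = _
        rw [map_mul]; rfl
      rw [h1, hlenmul, hlenof] at hl0
      omega

lemma len_pow (len : DerMon X → ℕ)
    (hlenmul : ∀ a b : DerMon X, len (a * b) = len a + len b)
    (hlenof : ∀ x : X, len (dof x) = 1) (z : X) (n : ℕ) :
    len (dof z ^ n) = n := by
  induction n with
  | zero => simpa using len_one len hlenmul
  | succ n ih => rw [pow_succ, hlenmul, ih, hlenof]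

/-- For `u ∈ Λ`, the element `c_u = (du, id)` belongs to `S_u` and is central in
`S_u`. -/
theorem statement6
    {X : Type*} [Fintype X] (r : X × X → X × X) (hYB : YB r) (hidem : r ∘ r = r)
    (L : DerMon X → Equiv.Perm X)
    (hLx : ∀ x y : X, L (dof x) y = lam r x y)
    (hL1 : L 1 = 1)
    (act : Equiv.Perm X → DerMon X →* DerMon X)
    (hact : ∀ (f : Equiv.Perm X) (x : X), act f (dof x) = dof (f x))
    (hact1 : ∀ a : DerMon X, act 1 a = a)
    (hactmul : ∀ (f g : Equiv.Perm X) (a : DerMon X), act (f * g) a = act f (act g a))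
    (len : DerMon X → ℕ)
    (hlenmul : ∀ a b : DerMon X, len (a * b) = len a + len b)
    (hlenof : ∀ x : X, len (dof x) = 1)
    (hcoc : ∀ a b : DerMon X, L (a * act (L a) b) = L a * L b)
    (d : ℕ) (hd : 0 < d) (hdexp : ∀ a : DerMon X, L a ^ d = 1)
    :
    ∀ u ∈ Set.range (qmap L),
      L ((dof u : DerMon X) ^ d) = 1 ∧
      (dof u : DerMon X) ^ d ∈ Su L act len u ∧
      ∀ a ∈ Su L act len u,
        sop L act a ((dof u : DerMon X) ^ d) = sop L act ((dof u : DerMon X) ^ d) a := by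
  rintro u ⟨t, rfl⟩
  set u := qmap L t with hu
  have hactpow : ∀ (f : Equiv.Perm X) (z : X) (n : ℕ),
      act f (dof z ^ n) = dof (f z) ^ n := by
    intro f z n; rw [map_pow, hact]
  -- key recursion for L on powers
  have key : ∀ n : ℕ, ∀ v : X,
      L (dof v ^ (n + 1)) = (L (dof t)) ^ n * L (dof ((((L (dof t))⁻¹) ^ n : Equiv.Perm X) v)) := by
    intro n
    induction n with
    | zero => intro v; simp
    | succ n ih =>
      intro v
      have h1 := hcoc (dof t) (dof (((L (dof t))⁻¹ : Equiv.Perm X) v) ^ (n + 1))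
      rw [hactpow] at h1
      rw [show ∀ (f : Equiv.Perm X) (x : X), f (f⁻¹ x) = x from fun f x => f.apply_symm_apply x] at h1
      rw [dof_mul_pow t v (n + 1) (Nat.le_add_left 1 n)] at h1
      rw [h1, ih (((L (dof t))⁻¹ : Equiv.Perm X) v)]
      rw [← mul_assoc, ← pow_succ' (L (dof t)) n]
      have h3 : (((L (dof t))⁻¹ ^ n : Equiv.Perm X)) (((L (dof t))⁻¹ : Equiv.Perm X) v)
          = (((L (dof t))⁻¹ ^ (n + 1) : Equiv.Perm X)) v := by
        rw [← Equiv.Perm.mul_apply, ← pow_succ]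
      rw [h3]
  -- Part 1 : L (dof u ^ d) = 1
  obtain ⟨e, rfl⟩ := Nat.exists_eq_add_of_lt hd
  rw [zero_add] at *
  have h2 : ((((L (dof t))⁻¹) ^ e : Equiv.Perm X) u) = t := by
    rw [hu, qmap, ← Equiv.Perm.mul_apply]
    rw [← pow_succ, inv_pow, hdexp (dof t)]
    simp
  have hLc : L (dof u ^ (e + 1)) = 1 := by
    rw [key e u, h2, ← pow_succ, hdexp (dof t)]
  refine ⟨hLc, ⟨?_, ?_⟩, ?_⟩
  · -- dof u ^ d ≠ 1
    intro h
    have := len_pow len hlenmul hlenof u (e + 1)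
    rw [h, len_one len hlenmul] at this
    omega
  · -- the λ⁻¹ condition
    rw [hLc, inv_one, hact1, len_pow len hlenmul hlenof]
  · -- centrality
    rintro a ⟨ha1, ha2⟩
    have hn := len_pos_of_ne_one len hlenmul hlenof a ha1
    have haform : a = dof ((L a) u) ^ (len a) := by
      have := congrArg (act (L a)) ha2
      rw [hactpow] at this
      rw [← this, ← hactmul, mul_inv_cancel, hact1]
    rw [sop, sop, hLc, hact1, hactpow]
    calc a * dof ((L a) u) ^ (e + 1)
        = dof ((L a) u) ^ (len a) * dof ((L a) u) ^ (e + 1) := by rw [← haform]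
      _ = dof ((L a) u) ^ (len a + (e + 1)) := by rw [← pow_add]
      _ = dof u ^ (e + 1) * dof ((L a) u) ^ (len a) := by
          rw [collapse len hlenmul hlenof (dof u ^ (e+1)) ((L a) u) (len a) hn,
            len_pow len hlenmul hlenof]
          congr 1
          omega
      _ = dof u ^ (e + 1) * a := by rw [← haform]
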